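/- arXiv:1911.00098 — 2 statements merged into one kernel-verified Lean document; each statement's English description precedes it below -/
import Mathlib

section
/- The moment conditions imply the moment bounds: if the pair (ν, A) satisfies (MC), i.e. for all b ∈ ℝ^{1+m(m+1)/2}, H̃ᵀb ≥ 0 implies bᵀα̃ ≥ 0, then for every subset J ⊆ {1,…,m}: ν ≥ ∑_{j∈J} α_j − ∑_{j,j'∈J, j≠j'} α_{jj'}, where α_j = A_{jj} and α_{jj'} = A_{jj'}. -/
open Matrix BigOperators

lemma sum_subtype_lt (m : ℕ) (g : Fin m × Fin m → ℝ) :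
    ∑ p : {p : Fin m × Fin m // p.1 < p.2}, g p.1
      = ∑ p ∈ Finset.univ.filter (fun p : Fin m × Fin m => p.1 < p.2), g p := by
  rw [Finset.sum_subtype (Finset.univ.filter (fun p : Fin m × Fin m => p.1 < p.2))]
  intro x; simp

lemma sum_pairs (m : ℕ) (f : Fin m → Fin m → ℝ) (hf : ∀ a b, f a b = f b a) :
    ∑ j : Fin m, ∑ j' : Fin m, (if j ≠ j' then f j j' else 0)
      = 2 * ∑ p : {p : Fin m × Fin m // p.1 < p.2}, f p.1.1 p.1.2 := by
  rw [sum_subtype_lt m (fun p => f p.1 p.2)]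
  rw [← Finset.sum_product']
  rw [Finset.sum_ite, Finset.sum_const_zero, add_zero]
  have hsplit := Finset.sum_filter_add_sum_filter_not
    ((Finset.univ ×ˢ Finset.univ).filter (fun p : Fin m × Fin m => p.1 ≠ p.2))
    (fun p : Fin m × Fin m => p.1 < p.2) (fun p => f p.1 p.2)
  rw [← hsplit]
  have h1 : ((Finset.univ ×ˢ Finset.univ).filter (fun p : Fin m × Fin m => p.1 ≠ p.2)).filter
      (fun p : Fin m × Fin m => p.1 < p.2)
      = Finset.univ.filter (fun p : Fin m × Fin m => p.1 < p.2) := by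
    ext p
    simp only [Finset.mem_filter, Finset.mem_product, Finset.mem_univ, true_and, and_true,
      ne_eq, not_lt, Fin.lt_def, Fin.le_def, Fin.ext_iff]
    omega
  have h2 : ((Finset.univ ×ˢ Finset.univ).filter (fun p : Fin m × Fin m => p.1 ≠ p.2)).filter
      (fun p : Fin m × Fin m => ¬ p.1 < p.2)
      = Finset.univ.filter (fun p : Fin m × Fin m => p.2 < p.1) := by
    ext p
    simp only [Finset.mem_filter, Finset.mem_product, Finset.mem_univ, true_and, and_true,
      ne_eq, not_lt, Fin.lt_def, Fin.le_def, Fin.ext_iff]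
    omega
  rw [h1, h2]
  have h3 : ∑ p ∈ Finset.univ.filter (fun p : Fin m × Fin m => p.2 < p.1), f p.1 p.2
      = ∑ p ∈ Finset.univ.filter (fun p : Fin m × Fin m => p.1 < p.2), f p.1 p.2 := by
    apply Finset.sum_nbij' (fun p => Prod.swap p) (fun p => Prod.swap p)
    · intro p hp; simp at hp ⊢; exact hp
    · intro p hp; simp at hp ⊢; exact hp
    · intro p _; simp
    · intro p _; simp
    · intro p _; simp [hf p.1 p.2]
  rw [h3]; ring

/-- The `m × 2^m` binary transformation matrix. -/
noncomputable def Hmat (m : ℕ) : Matrix (Fin m) (Fin (2 ^ m)) ℝ :=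
  fun j k => if Nat.testBit (k : ℕ) (m - 1 - (j : ℕ)) then 1 else 0

/-- Row index type for the stacked matrix `H̃`: first-order rows, one row per
unordered pair `j < j'`, and a final all-ones row. Its cardinality is
`m + m(m−1)/2 + 1 = 1 + m(m+1)/2`. -/
abbrev RIdx (m : ℕ) := Fin m ⊕ {p : Fin m × Fin m // p.1 < p.2} ⊕ Unit

/-- The matrix `H̃` stacking `H(m)`, the pairwise Hadamard products of its rows,
and the all-ones row. -/
noncomputable def Htilde (m : ℕ) : Matrix (RIdx m) (Fin (2 ^ m)) ℝ :=
  fun i k =>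
    match i with
    | Sum.inl j => Hmat m j k
    | Sum.inr (Sum.inl p) => Hmat m p.1.1 k * Hmat m p.1.2 k
    | Sum.inr (Sum.inr _) => 1

/-- The derived moment vector `α̃ = (diag(A)ᵀ, (upper off-diagonal of A)ᵀ, ν)ᵀ`. -/
noncomputable def alphaTilde (m : ℕ) (ν : ℝ) (A : Matrix (Fin m) (Fin m) ℝ) :
    RIdx m → ℝ :=
  fun i =>
    match i with
    | Sum.inl j => A j j
    | Sum.inr (Sum.inl p) => A p.1.1 p.1.2
    | Sum.inr (Sum.inr _) => ν

/-- The moment conditions (MC) for the pair `(ν, A)`. -/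
def MC (m : ℕ) (ν : ℝ) (A : Matrix (Fin m) (Fin m) ℝ) : Prop :=
  ∀ b : RIdx m → ℝ, (∀ k, 0 ≤ ((Htilde m)ᵀ *ᵥ b) k) → 0 ≤ b ⬝ᵥ alphaTilde m ν A

/-- MC implies moment bounds: if `(ν, A)` satisfies (MC), then for every
subset `J ⊆ {1,…,m}`: `ν ≥ ∑_{j∈J} α_j − ∑_{j,j'∈J, j≠j'} α_{jj'}` where
`α_j = A j j` and `α_{jj'} = A j j'`. -/
theorem MC_implies_moment_bounds (m : ℕ) (ν : ℝ) (hν : 0 < ν)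
    (A : Matrix (Fin m) (Fin m) ℝ) (hsymm : A.IsSymm) (hpos : ∀ j j', 0 ≤ A j j')
    (hMC : MC m ν A) :
    ∀ J : Finset (Fin m),
      (∑ j ∈ J, A j j) - (∑ j ∈ J, ∑ j' ∈ J, if j ≠ j' then A j j' else 0) ≤ ν := by
  intro J
  set b : RIdx m → ℝ := fun i =>
    match i with
    | Sum.inl j => if j ∈ J then -1 else 0
    | Sum.inr (Sum.inl p) => if p.1.1 ∈ J ∧ p.1.2 ∈ J then 2 else 0
    | Sum.inr (Sum.inr _) => 1 with hb
  have hkey : 0 ≤ b ⬝ᵥ alphaTilde m ν A := by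
    apply hMC
    intro k
    have hmv : ((Htilde m)ᵀ *ᵥ b) k = ∑ i : RIdx m, Htilde m i k * b i := by
      simp [Matrix.mulVec, dotProduct, Matrix.transpose_apply]
    rw [hmv]
    set x : Fin m → ℝ := fun j => if j ∈ J then Hmat m j k else 0 with hx
    have hx01 : ∀ j, x j * x j = x j := by
      intro j
      simp only [hx, Hmat]
      split_ifs <;> norm_num
    rw [Fintype.sum_sum_type, Fintype.sum_sum_type]
    have e1 : ∑ j : Fin m, Htilde m (Sum.inl j) k * b (Sum.inl j) = -∑ j, x j := by
      rw [← Finset.sum_neg_distrib]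
      apply Finset.sum_congr rfl
      intro j _
      by_cases h : j ∈ J <;> simp [Htilde, hb, hx, h]
    have e2 : ∑ p : {p : Fin m × Fin m // p.1 < p.2},
        Htilde m (Sum.inr (Sum.inl p)) k * b (Sum.inr (Sum.inl p))
        = 2 * ∑ p : {p : Fin m × Fin m // p.1 < p.2}, x p.1.1 * x p.1.2 := by
      rw [Finset.mul_sum]
      apply Finset.sum_congr rfl
      intro p _
      by_cases h1 : p.1.1 ∈ J <;> by_cases h2 : p.1.2 ∈ J <;>
        simp [Htilde, hb, hx, h1, h2] <;> ring
    have e3 : ∑ _u : Unit, Htilde m (Sum.inr (Sum.inr _u)) k * b (Sum.inr (Sum.inr _u)) = 1 := by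
      simp [Htilde, hb]
    rw [e1, e2, e3]
    have hsp := sum_pairs m (fun j j' => x j * x j') (fun a b => by ring)
    have hdiag : ∑ j : Fin m, ∑ j' : Fin m, (if j ≠ j' then x j * x j' else 0)
        = (∑ j, x j) * (∑ j, x j) - ∑ j, x j := by
      have inner : ∀ j : Fin m, ∑ j' : Fin m, (if j ≠ j' then x j * x j' else 0)
          = x j * (∑ j', x j') - x j := by
        intro j
        have hpt : ∀ j' : Fin m, (if j ≠ j' then x j * x j' else 0)
            = x j * x j' - (if j = j' then x j * x j' else 0) := by
          intro j'
          by_cases h : j = j' <;> simp [h]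
        rw [Finset.sum_congr rfl (fun j' _ => hpt j'), Finset.sum_sub_distrib,
          ← Finset.mul_sum]
        simp [hx01 j]
      rw [Finset.sum_congr rfl (fun j _ => inner j), Finset.sum_sub_distrib,
        ← Finset.sum_mul]
    rw [← hsp, hdiag] at *
    nlinarith [sq_nonneg ((∑ j, x j) - 1)]
  -- now compute the dot product
  set g : Fin m → Fin m → ℝ := fun j j' => if j ∈ J ∧ j' ∈ J then A j j' else 0 with hg
  have hgsymm : ∀ a c : Fin m, g a c = g c a := by
    intro a c
    have : A c a = A a c := by
      have := congrFun (congrFun hsymm a) c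
      simpa [Matrix.transpose_apply] using this
    simp [hg, this, and_comm]
  have hsp2 := sum_pairs m g hgsymm
  have hdot : b ⬝ᵥ alphaTilde m ν A
      = -(∑ j ∈ J, A j j) + 2 * (∑ p : {p : Fin m × Fin m // p.1 < p.2}, g p.1.1 p.1.2) + ν := by
    rw [dotProduct, Fintype.sum_sum_type, Fintype.sum_sum_type]
    have t1 : ∑ j : Fin m, b (Sum.inl j) * alphaTilde m ν A (Sum.inl j)
        = -(∑ j ∈ J, A j j) := by
      have hpt : ∀ j : Fin m, b (Sum.inl j) * alphaTilde m ν A (Sum.inl j)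
          = if j ∈ J then -(A j j) else 0 := by
        intro j; by_cases h : j ∈ J <;> simp [hb, alphaTilde, h]
      rw [Finset.sum_congr rfl (fun j _ => hpt j), Finset.sum_ite_mem, Finset.univ_inter,
        Finset.sum_neg_distrib]
    have t2 : ∑ p : {p : Fin m × Fin m // p.1 < p.2},
        b (Sum.inr (Sum.inl p)) * alphaTilde m ν A (Sum.inr (Sum.inl p))
        = 2 * ∑ p : {p : Fin m × Fin m // p.1 < p.2}, g p.1.1 p.1.2 := by
      rw [Finset.mul_sum]
      apply Finset.sum_congr rfl
      intro p _
      by_cases h : p.1.1 ∈ J ∧ p.1.2 ∈ J <;> simp [hb, alphaTilde, hg, h] <;> ring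
    have t3 : ∑ _u : Unit, b (Sum.inr (Sum.inr _u)) * alphaTilde m ν A (Sum.inr (Sum.inr _u))
        = ν := by
      simp [hb, alphaTilde]
    rw [t1, t2, t3]
    ring
  have hJg : ∑ j ∈ J, ∑ j' ∈ J, (if j ≠ j' then A j j' else 0)
      = ∑ j : Fin m, ∑ j' : Fin m, (if j ≠ j' then g j j' else 0) := by
    have inner : ∀ j : Fin m, ∑ j' : Fin m, (if j ≠ j' then g j j' else 0)
        = if j ∈ J then ∑ j' ∈ J, (if j ≠ j' then A j j' else 0) else 0 := by
      intro j
      by_cases h1 : j ∈ J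
      · have hpt : ∀ j' : Fin m, (if j ≠ j' then g j j' else 0)
            = if j' ∈ J then (if j ≠ j' then A j j' else 0) else 0 := by
          intro j'
          by_cases h2 : j' ∈ J <;> by_cases h3 : j = j' <;> simp [hg, h1, h2, h3]
        rw [Finset.sum_congr rfl (fun j' _ => hpt j'), Finset.sum_ite_mem,
          Finset.univ_inter, if_pos h1]
      · simp [hg, h1]
    symm
    rw [Finset.sum_congr rfl (fun j _ => inner j), Finset.sum_ite_mem, Finset.univ_inter]
  linarith [hkey, hdot, hsp2, hJg]
end

section
/- For m = 2 and the Fréchet bounds on the moment matrix, the induced bounds on the correlation coefficient are: max(−(ψ_1ψ_2)^{-1}, −ψ_1ψ_2) ≤ ρ_{12} ≤ min(ψ_1/ψ_2, ψ_2/ψ_1), where ψ_j = sqrt(μ_j/(1−μ_j)). Precisely: given ν > 0, μ_1, μ_2 ∈ (0,1), and ρ_{12} ∈ (−1,1), set α_j = νμ_j, σ_j² = μ_j(1−μ_j)/(ν+1), σ_{12} = ρ_{12}σ_1σ_2, and α_{12} = ν((ν+1)σ_{12} + μ_1μ_2). Then the inequalities max(0, α_1 + α_2 − ν) ≤ α_{12}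 ≤ min(α_1, α_2) hold if and only if max(−(ψ_1ψ_2)^{-1}, −ψ_1ψ_2) ≤ ρ_{12} ≤ min(ψ_1/ψ_2, ψ_2/ψ_1). -/
/-!
Write `τⱼ = √(μⱼ(1 − μⱼ))`, so that `σ₁₂ (ν + 1) = ρ τ₁ τ₂` and `μⱼ = ψⱼ τⱼ`, `1 − μⱼ = τⱼ / ψⱼ`.
After dividing by `ν`, each Fréchet bound becomes a linear inequality in `ρ` scaled by `τ₁ τ₂ > 0`;
for instance `α₁₂ / ν = τ₁ τ₂ (ρ + ψ₁ ψ₂)`, so `0 ≤ α₁₂` is exactly `−ψ₁ ψ₂ ≤ ρ`.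
-/

namespace Real

lemma sqrt_div_mul_sqrt_mul {a b : ℝ} (ha : 0 ≤ a) (hb : 0 < b) : √(a / b) * √(a * b) = a := by
  rw [← sqrt_mul (div_nonneg ha hb.le), show a / b * (a * b) = a ^ 2 by field_simp, sqrt_sq ha]

lemma sqrt_mul_div_sqrt_div {a b : ℝ} (ha : 0 < a) (hb : 0 ≤ b) : √(a * b) / √(a / b) = b := by
  rw [← sqrt_div' _ (div_nonneg ha.le hb), show a * b / (a / b) = b ^ 2 by field_simp, sqrt_sq hb]

lemma mul_sqrt_div_mul_sqrt_div (a b : ℝ) {c : ℝ} (hc : 0 < c) :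
    c * (√(a / c) * √(b / c)) = √a * √b := by
  rw [sqrt_div' _ hc.le, sqrt_div' _ hc.le, div_mul_div_comm, mul_self_sqrt hc.le,
    mul_div_cancel₀ _ hc.ne']

end Real

section FrechetBounds

variable {ρ μ₁ μ₂ ψ₁ ψ₂ τ₁ τ₂ : ℝ}

lemma frechet_lower_zero_iff (hτ : 0 < τ₁ * τ₂) (h₁ : μ₁ = ψ₁ * τ₁) (h₂ : μ₂ = ψ₂ * τ₂) :
    0 ≤ ρ * (τ₁ * τ₂) + μ₁ * μ₂ ↔ -(ψ₁ * ψ₂) ≤ ρ := by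
  have hfactor : ρ * (τ₁ * τ₂) + μ₁ * μ₂ = τ₁ * τ₂ * (ρ + ψ₁ * ψ₂) := by subst h₁ h₂; ring
  rw [hfactor, mul_nonneg_iff_of_pos_left hτ, neg_le_iff_add_nonneg]

lemma frechet_lower_iff (hτ : 0 < τ₁ * τ₂)
    (h₁ : 1 - μ₁ = τ₁ / ψ₁) (h₂ : 1 - μ₂ = τ₂ / ψ₂) :
    μ₁ + μ₂ - 1 ≤ ρ * (τ₁ * τ₂) + μ₁ * μ₂ ↔ -(ψ₁ * ψ₂)⁻¹ ≤ ρ := by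
  have hshift : μ₁ + μ₂ - 1 - μ₁ * μ₂ = τ₁ * τ₂ * -(ψ₁ * ψ₂)⁻¹ := by
    rw [show μ₁ + μ₂ - 1 - μ₁ * μ₂ = -((1 - μ₁) * (1 - μ₂)) by ring, h₁, h₂]
    ring
  rw [← sub_le_iff_le_add, hshift, mul_comm ρ, mul_le_mul_iff_of_pos_left hτ]

lemma frechet_upper_iff (hτ : 0 < τ₁ * τ₂)
    (h₁ : μ₁ = ψ₁ * τ₁) (h₂ : 1 - μ₂ = τ₂ / ψ₂) :
    ρ * (τ₁ * τ₂) + μ₁ * μ₂ ≤ μ₁ ↔ ρ ≤ ψ₁ / ψ₂ := by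
  have hshift : μ₁ - μ₁ * μ₂ = τ₁ * τ₂ * (ψ₁ / ψ₂) := by
    rw [show μ₁ - μ₁ * μ₂ = μ₁ * (1 - μ₂) by ring, h₁, h₂]
    ring
  rw [← le_sub_iff_add_le, hshift, mul_comm ρ, mul_le_mul_iff_of_pos_left hτ]

end FrechetBounds

theorem frechet_correlation_bounds_general (ν μ₁ μ₂ ρ : ℝ)
    (hν : 0 < ν) (hμ₁ : μ₁ ∈ Set.Ioo (0 : ℝ) 1) (hμ₂ : μ₂ ∈ Set.Ioo (0 : ℝ) 1)
    (α₁ α₂ σ₁ σ₂ σ₁₂ α₁₂ ψ₁ ψ₂ : ℝ)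
    (hα₁ : α₁ = ν * μ₁) (hα₂ : α₂ = ν * μ₂)
    (hσ₁ : σ₁ = Real.sqrt (μ₁ * (1 - μ₁) / (ν + 1)))
    (hσ₂ : σ₂ = Real.sqrt (μ₂ * (1 - μ₂) / (ν + 1)))
    (hσ₁₂ : σ₁₂ = ρ * σ₁ * σ₂)
    (hα₁₂ : α₁₂ = ν * ((ν + 1) * σ₁₂ + μ₁ * μ₂))
    (hψ₁ : ψ₁ = Real.sqrt (μ₁ / (1 - μ₁)))
    (hψ₂ : ψ₂ = Real.sqrt (μ₂ / (1 - μ₂))) :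
    (max 0 (α₁ + α₂ - ν) ≤ α₁₂ ∧ α₁₂ ≤ min α₁ α₂)
      ↔ (max (-(ψ₁ * ψ₂)⁻¹) (-(ψ₁ * ψ₂)) ≤ ρ ∧ ρ ≤ min (ψ₁ / ψ₂) (ψ₂ / ψ₁)) := by
  set τ₁ := √(μ₁ * (1 - μ₁))
  set τ₂ := √(μ₂ * (1 - μ₂))
  obtain ⟨hμ₁0, hμ₁1⟩ := hμ₁
  obtain ⟨hμ₂0, hμ₂1⟩ := hμ₂
  have hτ : 0 < τ₁ * τ₂ := mul_pos (Real.sqrt_pos.2 (mul_pos hμ₁0 (sub_pos.2 hμ₁1)))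
    (Real.sqrt_pos.2 (mul_pos hμ₂0 (sub_pos.2 hμ₂1)))
  have hμ₁τ : μ₁ = ψ₁ * τ₁ := hψ₁ ▸ (Real.sqrt_div_mul_sqrt_mul hμ₁0.le (sub_pos.2 hμ₁1)).symm
  have hμ₂τ : μ₂ = ψ₂ * τ₂ := hψ₂ ▸ (Real.sqrt_div_mul_sqrt_mul hμ₂0.le (sub_pos.2 hμ₂1)).symm
  have h1μ₁τ : 1 - μ₁ = τ₁ / ψ₁ :=
    hψ₁ ▸ (Real.sqrt_mul_div_sqrt_div hμ₁0 (sub_pos.2 hμ₁1).le).symm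
  have h1μ₂τ : 1 - μ₂ = τ₂ / ψ₂ :=
    hψ₂ ▸ (Real.sqrt_mul_div_sqrt_div hμ₂0 (sub_pos.2 hμ₂1).le).symm
  have hα₁₂τ : α₁₂ = ν * (ρ * (τ₁ * τ₂) + μ₁ * μ₂) := by
    rw [hα₁₂, hσ₁₂, hσ₁, hσ₂, mul_assoc ρ, mul_left_comm,
      Real.mul_sqrt_div_mul_sqrt_div _ _ (by linarith)]
  have hsum : α₁ + α₂ - ν = ν * (μ₁ + μ₂ - 1) := by rw [hα₁, hα₂]; ring
  rw [max_le_iff, le_min_iff, max_le_iff, le_min_iff, hα₁₂τ, hsum, hα₁, hα₂,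
    mul_nonneg_iff_of_pos_left hν, mul_le_mul_iff_of_pos_left hν,
    mul_le_mul_iff_of_pos_left hν, mul_le_mul_iff_of_pos_left hν,
    frechet_lower_zero_iff hτ hμ₁τ hμ₂τ, frechet_lower_iff hτ h1μ₁τ h1μ₂τ,
    frechet_upper_iff hτ hμ₁τ h1μ₂τ, mul_comm τ₁, mul_comm μ₁,
    frechet_upper_iff (mul_comm τ₁ τ₂ ▸ hτ) hμ₂τ h1μ₁τ]
  tauto

/-- for `m = 2`, the Fréchet bounds on the moment matrix translate into
the correlation bounds `max(−(ψ₁ψ₂)⁻¹, −ψ₁ψ₂) ≤ ρ₁₂ ≤ min(ψ₁/ψ₂, ψ₂/ψ₁)` with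
`ψⱼ = √(μⱼ/(1−μⱼ))`. -/
theorem frechet_correlation_bounds (ν μ₁ μ₂ ρ : ℝ)
    (hν : 0 < ν) (hμ₁ : μ₁ ∈ Set.Ioo (0 : ℝ) 1) (hμ₂ : μ₂ ∈ Set.Ioo (0 : ℝ) 1)
    (hρ : ρ ∈ Set.Ioo (-1 : ℝ) 1)
    (α₁ α₂ σ₁ σ₂ σ₁₂ α₁₂ ψ₁ ψ₂ : ℝ)
    (hα₁ : α₁ = ν * μ₁) (hα₂ : α₂ = ν * μ₂)
    (hσ₁ : σ₁ = Real.sqrt (μ₁ * (1 - μ₁) / (ν + 1)))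
    (hσ₂ : σ₂ = Real.sqrt (μ₂ * (1 - μ₂) / (ν + 1)))
    (hσ₁₂ : σ₁₂ = ρ * σ₁ * σ₂)
    (hα₁₂ : α₁₂ = ν * ((ν + 1) * σ₁₂ + μ₁ * μ₂))
    (hψ₁ : ψ₁ = Real.sqrt (μ₁ / (1 - μ₁)))
    (hψ₂ : ψ₂ = Real.sqrt (μ₂ / (1 - μ₂))) :
    (max 0 (α₁ + α₂ - ν) ≤ α₁₂ ∧ α₁₂ ≤ min α₁ α₂)
      ↔ (max (-(ψ₁ * ψ₂)⁻¹) (-(ψ₁ * ψ₂)) ≤ ρ ∧ ρ ≤ min (ψ₁ / ψ₂) (ψ₂ / ψ₁)) :=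
  frechet_correlation_bounds_general ν μ₁ μ₂ ρ hν hμ₁ hμ₂ α₁ α₂ σ₁ σ₂ σ₁₂ α₁₂ ψ₁ ψ₂ hα₁ hα₂ hσ₁ hσ₂
    hσ₁₂ hα₁₂ hψ₁ hψ₂
end
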